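/- For every natural number p, the map S ↦ f_S is a bijection from the set of antichain covers of Fin p onto the set of Boolean functions f : (Fin p → Bool) → Bool that are monotone (if s ≤ t pointwise, with false < true, then f s ≤ f t) and nondegenerate. -/

import Mathlib

/-- The Boolean function associated with a family `S` of subsets of `Fin p`:
`fS S s = true` iff there exists `σ ∈ S` with `s k = true` for all `k ∈ σ`. -/
def fS {p : ℕ} (S : Finset (Finset (Fin p))) (s : Fin p → Bool) : Bool :=
  decide (∃ σ ∈ S, ∀ k ∈ σ, s k = true)

/-- `S` is an antichain cover of `Fin p`. -/
def AntichainCover {p : ℕ} (S : Finset (Finset (Fin p))) : Prop :=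
  IsAntichain (· ⊆ ·) (S : Set (Finset (Fin p))) ∧ ∀ i : Fin p, ∃ σ ∈ S, i ∈ σ

/-- A Boolean function is monotone. -/
def MonotoneB {p : ℕ} (f : (Fin p → Bool) → Bool) : Prop :=
  ∀ s t : Fin p → Bool, (∀ k, s k ≤ t k) → f s ≤ f t

/-- Coordinate `i` is essential for `f`. -/
def EssentialCoord {p : ℕ} (f : (Fin p → Bool) → Bool) (i : Fin p) : Prop :=
  ∃ s : Fin p → Bool, f (Function.update s i false) ≠ f (Function.update s i true)

/-- A Boolean function is nondegenerate: every coordinate is essential. -/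
def Nondegenerate {p : ℕ} (f : (Fin p → Bool) → Bool) : Prop :=
  ∀ i : Fin p, EssentialCoord f i

/-! Identify a state `s : Fin p → Bool` with its support. Then `fS S s = true` says that the
support of `s` lies in the upper closure of `S`, so an antichain `S` is recovered from `fS S` as the
set of minimal elements of that upper closure, and a monotone `f` is `fS` of the family of minimal
supports on which it is true. A coordinate lying in no member of `S` is irrelevant to `fS S`, so
nondegeneracy forces the cover property; conversely, if `i ∈ σ ∈ S`, removing `i` from `σ`
switches `fS S` off because `S` is an antichain. -/

namespace Finset

variable {α : Type*}

def boolSupport [Fintype α] (s : α → Bool) : Finset α := {k | s k = true}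

@[simp]
lemma mem_boolSupport [Fintype α] {s : α → Bool} {k : α} :
    k ∈ boolSupport s ↔ s k = true := by
  simp [boolSupport]

variable [DecidableEq α]

def boolIndicator (σ : Finset α) (k : α) : Bool := decide (k ∈ σ)

@[simp]
lemma boolIndicator_apply (σ : Finset α) (k : α) : σ.boolIndicator k = decide (k ∈ σ) := rfl

lemma boolIndicator_boolSupport [Fintype α] (s : α → Bool) :
    (boolSupport s).boolIndicator = s := by
  funext k
  cases h : s k <;> simp [h]

lemma boolSupport_boolIndicator [Fintype α] (σ : Finset α) :
    boolSupport σ.boolIndicator = σ := by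
  ext k
  simp

lemma monotone_boolIndicator : Monotone (boolIndicator : Finset α → α → Bool) :=
  fun _ _ hστ k => Bool.le_iff_imp.2 fun hk => by simpa using hστ (by simpa using hk)

lemma update_boolIndicator_true (σ : Finset α) (i : α) :
    Function.update σ.boolIndicator i true = (insert i σ).boolIndicator := by
  funext k
  by_cases hk : k = i <;> simp [hk]

lemma update_boolIndicator_false (σ : Finset α) (i : α) :
    Function.update σ.boolIndicator i false = (σ.erase i).boolIndicator := by
  funext k
  by_cases hk : k = i <;> simp [hk]

end Finset

open Finset

section

variable {p : ℕ} {S : Finset (Finset (Fin p))}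

lemma fS_eq_true_iff (S : Finset (Finset (Fin p))) (s : Fin p → Bool) :
    fS S s = true ↔ boolSupport s ∈ upperClosure (S : Set (Finset (Fin p))) := by
  simp [fS, mem_upperClosure, subset_iff]

lemma fS_boolIndicator_eq_true (S : Finset (Finset (Fin p))) (σ : Finset (Fin p)) :
    fS S σ.boolIndicator = true ↔ σ ∈ upperClosure (S : Set (Finset (Fin p))) := by
  rw [fS_eq_true_iff, boolSupport_boolIndicator]

lemma monotone_fS (S : Finset (Finset (Fin p))) : Monotone (fS S) := by
  intro s t hst
  refine Bool.le_iff_imp.2 fun hs => ?_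
  rw [fS_eq_true_iff] at hs ⊢
  refine (upperClosure _).upper (fun k hk => ?_) hs
  simpa using Bool.le_iff_imp.1 (hst k) (by simpa using hk)

lemma fS_update_of_forall_notMem {i : Fin p} (hi : ∀ σ ∈ S, i ∉ σ) (s : Fin p → Bool)
    (b : Bool) :
    fS S (Function.update s i b) = fS S s := by
  simp only [fS, decide_eq_decide]
  refine exists_congr fun σ => and_congr_right fun hσ => forall₂_congr fun k hk => ?_
  rw [Function.update_of_ne (ne_of_mem_of_not_mem hk (hi σ hσ))]

lemma exists_mem_of_essentialCoord_fS {i : Fin p} (hi : EssentialCoord (fS S) i) :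
    ∃ σ ∈ S, i ∈ σ := by
  by_contra! h
  obtain ⟨s, hs⟩ := hi
  exact hs (by rw [fS_update_of_forall_notMem h, fS_update_of_forall_notMem h])

lemma AntichainCover.nondegenerate_fS (hS : AntichainCover S) : Nondegenerate (fS S) := by
  intro i
  obtain ⟨σ, hσS, hiσ⟩ := hS.2 i
  refine ⟨σ.boolIndicator, ?_⟩
  rw [update_boolIndicator_false, update_boolIndicator_true, insert_eq_of_mem hiσ]
  have hσ : fS S σ.boolIndicator = true :=
    (fS_boolIndicator_eq_true S σ).2 (subset_upperClosure hσS)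
  have herase : fS S (σ.erase i).boolIndicator = false := by
    rw [Bool.eq_false_iff, ne_eq, fS_boolIndicator_eq_true, mem_upperClosure]
    rintro ⟨τ, hτS, hτ⟩
    have hτσ : τ = σ := hS.1.eq hτS hσS (hτ.trans (erase_subset i σ))
    exact (erase_ssubset hiσ).not_subset (hτσ ▸ hτ)
  simp [hσ, herase]

lemma injOn_fS :
    Set.InjOn fS
      {S : Finset (Finset (Fin p)) | IsAntichain (· ⊆ ·) (S : Set (Finset (Fin p)))} := by
  intro S hS T hT hST
  have hcl : upperClosure (S : Set (Finset (Fin p))) = upperClosure T :=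
    SetLike.ext fun σ => by rw [← fS_boolIndicator_eq_true, ← fS_boolIndicator_eq_true, hST]
  ext σ
  rw [← mem_coe, ← hS.minimal_mem_upperClosure_iff_mem, hcl,
    hT.minimal_mem_upperClosure_iff_mem, mem_coe]

open Classical in
noncomputable def minimalSupports (f : (Fin p → Bool) → Bool) : Finset (Finset (Fin p)) :=
  {σ | Minimal (fun τ => f τ.boolIndicator = true) σ}

lemma isAntichain_minimalSupports (f : (Fin p → Bool) → Bool) :
    IsAntichain (· ⊆ ·) (minimalSupports f : Set (Finset (Fin p))) := by
  simpa [minimalSupports] using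
    setOfPred_minimal_antichain fun τ : Finset (Fin p) => f τ.boolIndicator = true

lemma fS_minimalSupports {f : (Fin p → Bool) → Bool} (hf : Monotone f) :
    fS (minimalSupports f) = f := by
  funext s
  rw [Bool.eq_iff_iff, fS_eq_true_iff, mem_upperClosure]
  constructor
  · rintro ⟨σ, hσ, hσs⟩
    simp only [minimalSupports, coe_filter, mem_univ, true_and, Set.mem_ofPred_eq] at hσ
    rw [← boolIndicator_boolSupport s]
    exact Bool.le_iff_imp.1 (hf (monotone_boolIndicator hσs)) hσ.prop
  · intro hs
    obtain ⟨σ, hσs, hσ⟩ := exists_minimal_le_of_wellFoundedLT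
      (fun τ => f τ.boolIndicator = true) (boolSupport s)
      (show f (boolSupport s).boolIndicator = true by rwa [boolIndicator_boolSupport])
    exact ⟨σ, by simpa [minimalSupports] using hσ, hσs⟩

end

theorem antichain_covers_biject_monotone_nondegenerate (p : ℕ) :
    Set.BijOn (fS (p := p)) {S | AntichainCover S}
      {f : (Fin p → Bool) → Bool | MonotoneB f ∧ Nondegenerate f} := by
  refine ⟨fun S hS => ⟨monotone_fS S, hS.nondegenerate_fS⟩,
    (injOn_fS (p := p)).mono fun S hS => hS.1, ?_⟩
  rintro f ⟨hmono, hnd⟩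
  have hf : fS (minimalSupports f) = f := fS_minimalSupports hmono
  refine ⟨minimalSupports f, ⟨isAntichain_minimalSupports f, fun i => ?_⟩, hf⟩
  rw [← hf] at hnd
  exact exists_mem_of_essentialCoord_fS (hnd i)
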